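/- arXiv:2207.08641 — 6 statements merged into one kernel-verified Lean document; each statement's English description precedes it below -/
import Mathlib

section
/- Korselt's criterion: a composite positive integer n divides a^n - a for every integer a if and only if n is squarefree and p - 1 divides n - 1 for every prime p dividing n. -/
theorem stmt_2 (n : ℕ) (hn : 1 < n) (hcomp : ¬ n.Prime) :
    (∀ a : ℤ, (n : ℤ) ∣ a ^ n - a) ↔
      (Squarefree n ∧ ∀ p : ℕ, p.Prime → p ∣ n → (p - 1) ∣ (n - 1)) := by
  constructor
  · intro h
    constructor
    · rw [Nat.squarefree_iff_prime_squarefree]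
      intro p hp hpp
      have h1 : ((p : ℤ) * p) ∣ (p : ℤ) ^ n - p := by
        refine dvd_trans ?_ (h p)
        exact_mod_cast Int.natCast_dvd_natCast.2 hpp
      have h2 : ((p : ℤ) * p) ∣ (p : ℤ) ^ n := by
        have : (p : ℤ) ^ n = (p : ℤ) * p * p ^ (n - 2) := by
          rw [← pow_two, ← pow_add]
          congr 1
          omega
        rw [this]; exact Dvd.intro _ rfl
      have h3 : ((p : ℤ) * p) ∣ (p : ℤ) := by
        have := dvd_sub h2 h1
        simpa using this
      have h4 : (p * p : ℕ) ∣ p := by exact_mod_cast h3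
      have := Nat.le_of_dvd hp.pos h4
      nlinarith [hp.two_le]
    · intro p hp hpn
      haveI : Fact p.Prime := ⟨hp⟩
      obtain ⟨u, hu⟩ := IsCyclic.exists_generator (α := (ZMod p)ˣ)
      have hord : orderOf u = p - 1 := by
        rw [orderOf_eq_card_of_forall_mem_zpowers hu, Nat.card_eq_fintype_card,
          ZMod.card_units]
      set a : ℤ := ((u : ZMod p).val : ℤ) with ha
      have hca : ((a : ℤ) : ZMod p) = (u : ZMod p) := by
        simp [ha, ZMod.natCast_val, ZMod.cast_id]
      have hd : (p : ℤ) ∣ a ^ n - a := dvd_trans (Int.natCast_dvd_natCast.2 hpn) (h a)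
      have hz : ((u : ZMod p)) ^ n = (u : ZMod p) := by
        have := (ZMod.intCast_zmod_eq_zero_iff_dvd _ p).2 hd
        push_cast at this
        rw [hca] at this
        linear_combination this
      have hun : u ^ n = u := Units.ext (by push_cast [hz]; simp [hz])
      have h1 : u ^ (n - 1) = 1 := by
        have : u ^ (n - 1) * u = u := by
          rw [← pow_succ]
          have : n - 1 + 1 = n := by omega
          rw [this, hun]
        calc u ^ (n-1) = u ^ (n-1) * u * u⁻¹ := by group
          _ = 1 := by rw [this]; group
      rw [← hord]
      exact orderOf_dvd_of_pow_eq_one h1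
  · rintro ⟨hsf, hpd⟩ a
    have key : ∀ p ∈ n.primeFactors, p ∣ (a ^ n - a).natAbs := by
      intro p hp
      rw [Nat.mem_primeFactors] at hp
      obtain ⟨hp, hpn, -⟩ := hp
      haveI : Fact p.Prime := ⟨hp⟩
      rw [← Int.natCast_dvd]
      rw [← ZMod.intCast_zmod_eq_zero_iff_dvd]
      push_cast
      by_cases hz : (a : ZMod p) = 0
      · rw [hz, zero_pow (by omega), sub_zero]
      · obtain ⟨k, hk⟩ := hpd p hp hpn
        have h1 : (a : ZMod p) ^ (p - 1) = 1 := ZMod.pow_card_sub_one_eq_one hz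
        have : (a : ZMod p) ^ n = a := by
          have hne : n = (p - 1) * k + 1 := by
            have := hp.two_le
            omega
          rw [hne, pow_succ, pow_mul, h1, one_pow, one_mul]
        rw [this, sub_self]
    have hprod : n ∣ (a ^ n - a).natAbs := by
      conv_lhs => rw [← Nat.prod_primeFactors_of_squarefree hsf]
      exact Finset.prod_primes_dvd _ (fun p hp => (Nat.prime_of_mem_primeFactors hp).prime) key
    rwa [Int.natCast_dvd]
end

section
/- Let L be a squarefree positive integer and L' a divisor of L such that L/L' has at most D prime factors (counted with multiplicity). Then for any real y ≥ 1, the number of divisors d of L' with 1 ≤ d ≤ y is at least 2^{-D} times the number of divisors d of L with 1 ≤ d ≤ y. -/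
/-! Since `L` is squarefree, `L'` and `m = L / L'` are coprime, so `d ↦ (gcd d L', gcd d m)` is
injective on the divisors of `L = L' m`, and `gcd d L' ≤ d`. Hence the divisors of `L` below `y` are at
most `#m.divisors ≤ 2 ^ Ω m ≤ 2 ^ D` times as many as those of `L'`. -/

open Finset ArithmeticFunction
open scoped ArithmeticFunction.Omega

theorem Nat.card_divisors_le_two_pow_cardFactors (n : ℕ) : #n.divisors ≤ 2 ^ Ω n := by
  rcases eq_or_ne n 0 with rfl | hn
  · simp
  rw [Nat.card_divisors hn, cardFactors_eq_sum_factorization, Finsupp.sum,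
    Nat.support_factorization, ← prod_pow_eq_pow_sum]
  exact prod_le_prod' fun p _ => Nat.lt_two_pow_self

theorem Nat.card_filter_divisors_mul_le {a b : ℕ} (hab : a.Coprime b) (P : ℕ → Prop)
    [DecidablePred P] (hP : ∀ ⦃e d⦄, e ≤ d → P d → P e) :
    #((a * b).divisors.filter P) ≤ #(a.divisors.filter P) * #b.divisors := by
  rw [← card_product]
  refine card_le_card_of_injOn (fun d => (d.gcd a, d.gcd b)) ?_ ?_
  · intro d hd
    simp only [coe_filter, Nat.mem_divisors, Set.mem_ofPred_eq] at hd
    obtain ⟨⟨hdab, hab0⟩, hPd⟩ := hd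
    simp only [coe_product, coe_filter, Set.mem_prod, Set.mem_ofPred_eq, mem_coe, Nat.mem_divisors]
    refine ⟨⟨⟨Nat.gcd_dvd_right _ _, left_ne_zero_of_mul hab0⟩, hP ?_ hPd⟩,
      Nat.gcd_dvd_right _ _, right_ne_zero_of_mul hab0⟩
    exact Nat.gcd_le_left _ (Nat.pos_of_ne_zero (ne_zero_of_dvd_ne_zero hab0 hdab))
  · intro d hd d' hd' h
    simp only [coe_filter, Nat.mem_divisors, Set.mem_ofPred_eq] at hd hd'
    simp only [Prod.mk.injEq] at h
    rw [← Nat.gcd_eq_left hd.1.1, ← Nat.gcd_eq_left hd'.1.1, Nat.Coprime.gcd_mul _ hab,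
      Nat.Coprime.gcd_mul _ hab, h.1, h.2]

theorem stmt_3_general (L L' D : ℕ) (hL : Squarefree L) (hL' : L' ∣ L)
    (hD : (L / L').primeFactorsList.length ≤ D) (y : ℝ) :
    ((L.divisors.filter (fun d : ℕ => (d : ℝ) ≤ y)).card : ℝ) * (2 : ℝ) ^ (-(D : ℤ)) ≤
      ((L'.divisors.filter (fun d : ℕ => (d : ℝ) ≤ y)).card : ℝ) := by
  have hL_eq : L' * (L / L') = L := Nat.mul_div_cancel' hL'
  have hcop : L'.Coprime (L / L') := Nat.coprime_of_squarefree_mul (by rwa [hL_eq])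
  have hcount : #(L.divisors.filter (fun d : ℕ => (d : ℝ) ≤ y)) ≤
      #(L'.divisors.filter (fun d : ℕ => (d : ℝ) ≤ y)) * 2 ^ D := by
    rw [← hL_eq]
    refine (Nat.card_filter_divisors_mul_le hcop _
      fun e d hed hd => (Nat.cast_le.2 hed).trans hd).trans (Nat.mul_le_mul_left _ ?_)
    rw [← cardFactors_apply] at hD
    exact (Nat.card_divisors_le_two_pow_cardFactors _).trans (Nat.pow_le_pow_right two_pos hD)
  rw [zpow_neg, zpow_natCast, ← div_eq_mul_inv, div_le_iff₀ (by positivity)]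
  exact_mod_cast hcount

theorem stmt_3 (L L' D : ℕ) (hL : Squarefree L) (hL' : L' ∣ L) (hL'pos : 0 < L')
    (hD : (L / L').primeFactorsList.length ≤ D) (y : ℝ) (hy : 1 ≤ y) :
    ((L.divisors.filter (fun d : ℕ => (d : ℝ) ≤ y)).card : ℝ) * (2 : ℝ) ^ (-(D : ℤ)) ≤
      ((L'.divisors.filter (fun d : ℕ => (d : ℝ) ≤ y)).card : ℝ) :=
  stmt_3_general L L' D hL hL' hD y
end

section
/- Let G be a finite abelian group and n = n(G) the maximal length of a sequence of elements of G with no nonempty subsequence whose product is the identity. Let r > t > n be integers. Then any sequence of r elements of G contains at least C(r,t)/C(r,n) distinct (as index sets) nonempty subsequences of length at most t and at least t - n whose product of terms is the identity. -/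
/-!
Fix `t` of the `r` indices and let `S` be a product-one subset of them of maximal size. The
remaining `t - |S|` terms have no nonempty product-one subsequence, since its union with `S`
would be larger, so `|S| ≥ t - n`. Thus every `t`-set contains a nonempty product-one set of
size in `[t - n, t]`, while such a set of size `s` lies in only `C(r - s, t - s) ≤ C(r, n)` of
the `t`-sets; double counting gives the bound.
-/

open Finset

def IsProductOneFree {M : Type*} [Mul M] [One M] (l : List M) : Prop :=
  ∀ s ∈ l.sublists, s ≠ [] → s.prod ≠ 1

theorem Nat.choose_le_choose_add_add (a b k : ℕ) : a.choose b ≤ (a + k).choose (b + k) := by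
  induction k with
  | zero => rfl
  | succ k ih =>
    rw [← add_assoc, ← add_assoc, Nat.choose_succ_succ]
    exact ih.trans (Nat.le_add_right _ _)

theorem Nat.choose_sub_sub_le_choose {n t r s : ℕ} (hnt : n ≤ t) (htr : t ≤ r)
    (hts : t - n ≤ s) (hst : s ≤ t) : (r - s).choose (t - s) ≤ r.choose n :=
  calc (r - s).choose (t - s)
      ≤ (r - s + (s + n - t)).choose (t - s + (s + n - t)) := Nat.choose_le_choose_add_add _ _ _
    _ = (r + n - t).choose n := by congr 1 <;> omega
    _ ≤ r.choose n := Nat.choose_le_choose n (by omega)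

theorem choose_le_card_mul_choose_of_forall_exists_subset {ι : Type*} [Fintype ι]
    [DecidableEq ι] {n t : ℕ} (hnt : n ≤ t) (htι : t ≤ Fintype.card ι)
    (B : Finset (Finset ι)) (hB : ∀ S ∈ B, t - n ≤ #S ∧ #S ≤ t)
    (hcover : ∀ T : Finset ι, #T = t → ∃ S ∈ B, S ⊆ T) :
    (Fintype.card ι).choose t ≤ #B * (Fintype.card ι).choose n :=
  calc (Fintype.card ι).choose t
      = #((univ : Finset ι).powersetCard t) := by rw [card_powersetCard, card_univ]
    _ ≤ #(B.biUnion fun S => (univ.powersetCard t).filter (S ⊆ ·)) := by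
      refine card_le_card fun T hT => ?_
      obtain ⟨S, hSB, hST⟩ := hcover T (mem_powersetCard.mp hT).2
      exact mem_biUnion.mpr ⟨S, hSB, mem_filter.mpr ⟨hT, hST⟩⟩
    _ ≤ #B * (Fintype.card ι).choose n := card_biUnion_le_card_mul _ _ _ fun S hS => by
      rw [card_filter_powersetCard_subset S univ t (subset_univ S) (hB S hS).2, card_univ]
      exact Nat.choose_sub_sub_le_choose hnt htι (hB S hS).1 (hB S hS).2

theorem isProductOneFree_map_toList {ι M : Type*} [DecidableEq ι] [CommMonoid M] {f : ι → M}
    {s : Finset ι} (h : ∀ u ⊆ s, u.Nonempty → ∏ i ∈ u, f i ≠ 1) :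
    IsProductOneFree (s.toList.map f) := by
  intro l hl hne hprod
  obtain ⟨u, hu, rfl⟩ := List.sublist_map_iff.mp (List.mem_sublists.mp hl)
  refine h u.toFinset (fun i hi => mem_toList.mp (hu.subset (List.mem_toFinset.mp hi))) ?_ ?_
  · exact List.toFinset_nonempty_iff u |>.mpr (by simpa using hne)
  · rwa [List.prod_toFinset f (hu.nodup (nodup_toList s))]

theorem exists_subset_prod_eq_one_card_sdiff_le {ι M : Type*} [DecidableEq ι] [CommMonoid M]
    {n : ℕ} (hn : ∀ l : List M, IsProductOneFree l → l.length ≤ n) (f : ι → M)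
    (T : Finset ι) : ∃ S ⊆ T, ∏ i ∈ S, f i = 1 ∧ #(T \ S) ≤ n := by
  classical
  obtain ⟨S, hS, hmax⟩ :=
    (T.powerset.filter fun S => ∏ i ∈ S, f i = 1).exists_max_image card ⟨∅, by simp⟩
  rw [mem_filter, mem_powerset] at hS
  refine ⟨S, hS.1, hS.2, ?_⟩
  have hfree : ∀ u ⊆ T \ S, u.Nonempty → ∏ i ∈ u, f i ≠ 1 := by
    intro u hu hne hprod
    have hdisj : Disjoint S u := disjoint_of_subset_right hu disjoint_sdiff
    have hgrow := hmax (S ∪ u) <| mem_filter.mpr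
      ⟨mem_powerset.mpr (union_subset hS.1 (hu.trans sdiff_subset)),
        by rw [prod_union hdisj, hS.2, hprod, one_mul]⟩
    rw [card_union_of_disjoint hdisj] at hgrow
    exact absurd hgrow (by simpa using hne.ne_empty)
  simpa using hn _ (isProductOneFree_map_toList hfree)

theorem stmt_5_general {G : Type*} [CommGroup G] [DecidableEq G] (n t r : ℕ)
    (hn_max : ∀ l : List G, (∀ s ∈ l.sublists, s ≠ [] → s.prod ≠ 1) → l.length ≤ n)
    (hnt : n < t) (htr : t < r) (f : Fin r → G) :
    ((r.choose t : ℝ) / (r.choose n : ℝ)) ≤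
      ((Finset.univ.filter (fun S : Finset (Fin r) =>
          S.Nonempty ∧ t - n ≤ S.card ∧ S.card ≤ t ∧ ∏ i ∈ S, f i = 1)).card : ℝ) := by
  set B := univ.filter fun S : Finset (Fin r) =>
    S.Nonempty ∧ t - n ≤ #S ∧ #S ≤ t ∧ ∏ i ∈ S, f i = 1
  have hcover : ∀ T : Finset (Fin r), #T = t → ∃ S ∈ B, S ⊆ T := by
    intro T hT
    obtain ⟨S, hST, hprod, hcard⟩ := exists_subset_prod_eq_one_card_sdiff_le hn_max f T
    have hsdiff := card_sdiff_of_subset hST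
    have hle := card_le_card hST
    exact ⟨S, mem_filter.mpr ⟨mem_univ _, card_pos.mp (by omega), by omega, by omega, hprod⟩, hST⟩
  have hcount := choose_le_card_mul_choose_of_forall_exists_subset hnt.le
    (by simpa using htr.le) B (fun S hS => ⟨(mem_filter.mp hS).2.2.1, (mem_filter.mp hS).2.2.2.1⟩)
    hcover
  rw [Fintype.card_fin] at hcount
  rw [div_le_iff₀ (by exact_mod_cast Nat.choose_pos (hnt.trans htr).le)]
  exact_mod_cast hcount

theorem stmt_5 {G : Type*} [CommGroup G] [Fintype G] [DecidableEq G] (n t r : ℕ)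
    (hn_max : ∀ l : List G, (∀ s ∈ l.sublists, s ≠ [] → s.prod ≠ 1) → l.length ≤ n)
    (hn_ex : ∃ l : List G, (∀ s ∈ l.sublists, s ≠ [] → s.prod ≠ 1) ∧ l.length = n)
    (hnt : n < t) (htr : t < r) (f : Fin r → G) :
    ((r.choose t : ℝ) / (r.choose n : ℝ)) ≤
      ((Finset.univ.filter (fun S : Finset (Fin r) =>
          S.Nonempty ∧ t - n ≤ S.card ∧ S.card ≤ t ∧ ∏ i ∈ S, f i = 1)).card : ℝ) :=
  stmt_5_general n t r hn_max hnt htr f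
end

section
/- Let L and k be coprime positive integers with L ≥ 1, and let p_1, ..., p_s be an even number of pairwise distinct primes, each satisfying p_i ≡ -1 (mod k) and p_i + 1 = k·d_i for some divisor d_i of L, such that the product N = p_1 ⋯ p_s ≡ 1 (mod L). Then N ≡ 1 (mod kL), and hence p_i + 1 divides N - 1 for every i; in particular, if s ≥ 2, N is a (-1,1)-Carmichael number. -/
/-- A positive squarefree composite number `n` is a `(-1,1)`-Carmichael number if
`n ≠ 1` and `p + 1` divides `n - 1` for each prime `p` dividing `n`. -/
def IsNegOneOneCarmichael (n : ℕ) : Prop :=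
  Squarefree n ∧ 1 < n ∧ ¬ n.Prime ∧ ∀ p : ℕ, p.Prime → p ∣ n → (p + 1) ∣ (n - 1)

lemma squarefree_prod_primes (t : Finset ℕ) (ht : ∀ q ∈ t, q.Prime) :
    Squarefree (∏ q ∈ t, q) := by
  induction t using Finset.induction_on with
  | empty => simpa using squarefree_one
  | @insert a t ha ih =>
    rw [Finset.prod_insert ha]
    have hap : a.Prime := ht a (Finset.mem_insert_self a t)
    have htp : ∀ q ∈ t, q.Prime := fun q hq => ht q (Finset.mem_insert_of_mem hq)
    rw [Nat.squarefree_mul_iff]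
    refine ⟨?_, hap.prime.squarefree, ih htp⟩
    rw [hap.coprime_iff_not_dvd]
    intro hd
    obtain ⟨q, hq, hdq⟩ := hap.prime.exists_mem_finset_dvd hd
    exact ha (((Nat.prime_dvd_prime_iff_eq hap (htp q hq)).mp hdq) ▸ hq)

theorem stmt_6 (k L : ℕ) (hk : 0 < k) (hL : 0 < L) (hkL : Nat.Coprime k L)
    (s : ℕ) (hse : Even s) (p : Fin s → ℕ) (hinj : Function.Injective p)
    (hprime : ∀ i, (p i).Prime)
    (hcong : ∀ i, ((p i : ℤ)) ≡ -1 [ZMOD k])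
    (hdiv : ∀ i, ∃ d : ℕ, d ∣ L ∧ p i + 1 = k * d)
    (N : ℕ) (hN : N = ∏ i, p i) (hNL : (N : ℤ) ≡ 1 [ZMOD L]) :
    (N : ℤ) ≡ 1 [ZMOD (k * L)] ∧
      (∀ i, ((p i : ℤ) + 1) ∣ ((N : ℤ) - 1)) ∧
      (2 ≤ s → IsNegOneOneCarmichael N) := by
  -- N ≡ 1 mod k
  have hNk : (N : ℤ) ≡ 1 [ZMOD (k : ℤ)] := by
    rw [← ZMod.intCast_eq_intCast_iff]
    have key : ∀ i, ((p i : ℕ) : ZMod k) = -1 := by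
      intro i
      have h := (ZMod.intCast_eq_intCast_iff _ _ _).mpr (hcong i)
      push_cast at h
      exact h
    subst hN
    push_cast
    rw [Finset.prod_congr rfl fun i _ => key i, Finset.prod_const]
    simp [hse.neg_one_pow]
  -- combine moduli
  have hco : IsCoprime (k : ℤ) (L : ℤ) := Nat.isCoprime_iff_coprime.mpr hkL
  have hdk : (k : ℤ) ∣ (N : ℤ) - 1 := dvd_sub_comm.mp hNk.dvd
  have hdL : (L : ℤ) ∣ (N : ℤ) - 1 := dvd_sub_comm.mp hNL.dvd
  have hkLdvd : ((k : ℤ) * L) ∣ (N : ℤ) - 1 := hco.mul_dvd hdk hdL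
  have main : (N : ℤ) ≡ 1 [ZMOD ((k * L : ℕ) : ℤ)] := by
    rw [Int.modEq_iff_dvd]
    push_cast
    exact dvd_sub_comm.mp hkLdvd
  have hdvd2 : ∀ i, ((p i : ℤ) + 1) ∣ ((N : ℤ) - 1) := by
    intro i
    obtain ⟨d, hdl, heq⟩ := hdiv i
    have h1 : ((p i : ℤ) + 1) = (k : ℤ) * d := by exact_mod_cast congrArg (Nat.cast : ℕ → ℤ) heq
    rw [h1]
    exact dvd_trans (mul_dvd_mul_left _ (Int.natCast_dvd_natCast.mpr hdl)) hkLdvd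
  refine ⟨main, hdvd2, ?_⟩
  intro h2
  have hs0 : 0 < s := lt_of_lt_of_le (by norm_num) h2
  have hs1 : 1 < s := h2
  set i0 : Fin s := ⟨0, hs0⟩
  set i1 : Fin s := ⟨1, hs1⟩
  have hi01 : p i0 ≠ p i1 := fun h => by
    have := hinj h
    simp [i0, i1, Fin.ext_iff] at this
  have hdvd0 : p i0 ∣ N := hN ▸ Finset.dvd_prod_of_mem p (Finset.mem_univ i0)
  have hdvd1 : p i1 ∣ N := hN ▸ Finset.dvd_prod_of_mem p (Finset.mem_univ i1)
  have hNpos : 0 < N := by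
    rw [hN]
    exact Finset.prod_pos fun i _ => (hprime i).pos
  have hN1 : 1 < N := lt_of_lt_of_le (hprime i0).one_lt (Nat.le_of_dvd hNpos hdvd0)
  refine ⟨?_, hN1, ?_, ?_⟩
  · -- squarefree
    have : N = ∏ q ∈ Finset.image p Finset.univ, q := by
      rw [hN, Finset.prod_image fun a _ b _ h => hinj h]
    rw [this]
    exact squarefree_prod_primes _ fun q hq => by
      obtain ⟨i, _, rfl⟩ := Finset.mem_image.mp hq
      exact hprime i
  · -- not prime
    intro hNp
    rcases (hNp.eq_one_or_self_of_dvd _ hdvd0) with h | h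
    · exact (hprime i0).one_lt.ne' h
    rcases (hNp.eq_one_or_self_of_dvd _ hdvd1) with h' | h'
    · exact (hprime i1).one_lt.ne' h'
    exact hi01 (h.trans h'.symm)
  · -- divisor condition
    intro q hq hqN
    have : (q : ℕ) ∣ ∏ i, p i := hN ▸ hqN
    obtain ⟨i, _, hdq⟩ := hq.prime.exists_mem_finset_dvd this
    have hqe : q = p i := (Nat.prime_dvd_prime_iff_eq hq (hprime i)).mp hdq
    subst hqe
    have := hdvd2 i
    have hcast : ((p i + 1 : ℕ) : ℤ) ∣ ((N - 1 : ℕ) : ℤ) := by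
      rw [Nat.cast_sub hN1.le]
      push_cast
      exact this
    exact_mod_cast hcast
end

section
/- For real numbers y ≥ 3 and θ ≥ 1, the sum of reciprocals of primes q in the interval (y^θ/log y, y^θ] satisfies: ∑ 1/q ≤ log(θ log y / (θ log y − log log y)) + 1/(2(θ log y)^2) + 1/(2(log(y^θ/log y))^2), using the Rosser–Schoenfeld bounds |∑_{q ≤ x} 1/q − log log x − M| ≤ 1/(2(log x)^2) for x ≥ 286. -/
/-!
Both `y ^ θ` and `z = y ^ θ / log y` are at least 286, so the sum over primes in `(z, y ^ θ]`
is the difference of the two Rosser–Schoenfeld partial sums. The main terms combine to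
`log log (y ^ θ) - log log z = log (θ log y) - log (θ log y - log log y)`, and the two
error terms add up.
-/

open Real

theorem Finset.sum_filter_and_lt_eq_sub (p : ℕ → Prop) [DecidablePred p] (f : ℕ → ℝ) {a b : ℝ}
    (ha : 0 ≤ a) (hab : a ≤ b) :
    ∑ q ∈ (Finset.range (⌊b⌋₊ + 1)).filter (fun q => p q ∧ a < (q : ℝ)), f q =
      ∑ q ∈ (Finset.range (⌊b⌋₊ + 1)).filter p, f q -
        ∑ q ∈ (Finset.range (⌊a⌋₊ + 1)).filter p, f q := by
  have hsub : (Finset.range (⌊a⌋₊ + 1)).filter p ⊆ (Finset.range (⌊b⌋₊ + 1)).filter p :=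
    Finset.filter_subset_filter _ (Finset.range_subset_range.2 (by gcongr))
  rw [← Finset.sum_sdiff_eq_sub hsub]
  congr 1
  ext q
  have hle : q < ⌊a⌋₊ + 1 ↔ (q : ℝ) ≤ a := by rw [Nat.lt_succ_iff, Nat.le_floor_iff ha]
  simp only [Finset.mem_sdiff, Finset.mem_filter, Finset.mem_range, hle, not_and, ← not_le]
  tauto

theorem Real.one_le_log_of_three_le {y : ℝ} (hy : 3 ≤ y) : 1 ≤ log y :=
  (le_log_iff_exp_le (by linarith)).2 (by linarith [exp_one_lt_d9])

theorem Real.log_rpow_div_log {y : ℝ} (hy : 1 < y) (θ : ℝ) :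
    log (y ^ θ / log y) = θ * log y - log (log y) := by
  rw [log_div (rpow_pos_of_pos (by linarith) θ).ne' (log_pos hy).ne', log_rpow (by linarith)]

theorem stmt_15_general (y θ M : ℝ) (hy : 3 ≤ y)
    (h286 : 286 ≤ y ^ θ / Real.log y)
    (hRS : ∀ x : ℝ, 286 ≤ x →
      |(∑ q ∈ (Finset.range (⌊x⌋₊ + 1)).filter Nat.Prime, (1 : ℝ) / q)
          - Real.log (Real.log x) - M| ≤ 1 / (2 * (Real.log x) ^ 2)) :
    (∑ q ∈ (Finset.range (⌊y ^ θ⌋₊ + 1)).filter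
        (fun q => Nat.Prime q ∧ y ^ θ / Real.log y < (q : ℝ)), (1 : ℝ) / q) ≤
      Real.log (θ * Real.log y / (θ * Real.log y - Real.log (Real.log y)))
        + 1 / (2 * (θ * Real.log y) ^ 2)
        + 1 / (2 * (Real.log (y ^ θ / Real.log y)) ^ 2) := by
  have hlogy : 1 ≤ log y := one_le_log_of_three_le hy
  set z := y ^ θ / log y
  have hz_le : z ≤ y ^ θ := div_le_self (rpow_nonneg (by linarith) θ) hlogy
  have hlogz : log z = θ * log y - log (log y) := log_rpow_div_log (by linarith) θ
  have hlogz_pos : 0 < log z := log_pos (by linarith)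
  have hT_pos : 0 < θ * log y := by linarith [log_nonneg hlogy]
  rw [Finset.sum_filter_and_lt_eq_sub _ _ (by linarith) hz_le,
    log_div hT_pos.ne' (hlogz ▸ hlogz_pos.ne'), ← hlogz]
  have hupper := (abs_le.1 (hRS (y ^ θ) (h286.trans hz_le))).2
  have hlower := (abs_le.1 (hRS z h286)).1
  rw [log_rpow (by linarith) θ] at hupper
  linarith

theorem stmt_15 (y θ M : ℝ) (hy : 3 ≤ y) (hθ : 1 ≤ θ)
    (h286 : 286 ≤ y ^ θ / Real.log y)
    (hRS : ∀ x : ℝ, 286 ≤ x →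
      |(∑ q ∈ (Finset.range (⌊x⌋₊ + 1)).filter Nat.Prime, (1 : ℝ) / q)
          - Real.log (Real.log x) - M| ≤ 1 / (2 * (Real.log x) ^ 2)) :
    (∑ q ∈ (Finset.range (⌊y ^ θ⌋₊ + 1)).filter
        (fun q => Nat.Prime q ∧ y ^ θ / Real.log y < (q : ℝ)), (1 : ℝ) / q) ≤
      Real.log (θ * Real.log y / (θ * Real.log y - Real.log (Real.log y)))
        + 1 / (2 * (θ * Real.log y) ^ 2)
        + 1 / (2 * (Real.log (y ^ θ / Real.log y)) ^ 2) :=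
  stmt_15_general y θ M hy h286 hRS
end

section
/- If n is a (-1,1)-Carmichael number, then n is odd and every prime factor of n is odd; moreover n has at least three distinct prime factors. -/
theorem stmt_19 (n : ℕ) (hn : IsNegOneOneCarmichael n) :
    Odd n ∧ (∀ p : ℕ, p.Prime → p ∣ n → Odd p) ∧ 3 ≤ n.primeFactors.card := by
  obtain ⟨hsf, h1, hnp, hdvd⟩ := hn
  have hn0 : n ≠ 0 := by omega
  have hprod : ∏ p ∈ n.primeFactors, p = n := Nat.prod_primeFactors_of_squarefree hsf
  have hmem : ∀ p, p ∈ n.primeFactors ↔ p.Prime ∧ p ∣ n := by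
    intro p
    rw [Nat.mem_primeFactors]
    tauto
  -- at least two prime factors
  have h2 : 2 ≤ n.primeFactors.card := by
    by_contra h
    interval_cases hc : n.primeFactors.card
    · have : n.primeFactors = ∅ := Finset.card_eq_zero.mp hc
      have := Nat.primeFactors_eq_empty.mp this
      omega
    · obtain ⟨p, hp⟩ := Finset.card_eq_one.mp hc
      rw [hp, Finset.prod_singleton] at hprod
      have : p.Prime := ((hmem p).mp (hp ▸ Finset.mem_singleton_self p)).1
      exact hnp (hprod ▸ this)
  -- an odd prime factor exists
  have hodd1 : Even (n - 1) := by
    obtain ⟨p, hp, q, hq, hpq⟩ := Finset.one_lt_card.mp h2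
    obtain ⟨hpp, hpd⟩ := (hmem p).mp hp
    obtain ⟨hqp, hqd⟩ := (hmem q).mp hq
    have : ∃ r, r.Prime ∧ r ∣ n ∧ r ≠ 2 := by
      rcases eq_or_ne p 2 with h | h
      · exact ⟨q, hqp, hqd, by omega⟩
      · exact ⟨p, hpp, hpd, h⟩
    obtain ⟨r, hrp, hrd, hr2⟩ := this
    have hro : Odd r := hrp.odd_of_ne_two hr2
    have : (2 : ℕ) ∣ r + 1 := by
      obtain ⟨k, hk⟩ := hro
      exact ⟨k + 1, by omega⟩
    exact (even_iff_two_dvd).mpr (this.trans (hdvd r hrp hrd))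
  have hodd : Odd n := by
    obtain ⟨k, hk⟩ := hodd1
    exact ⟨k, by omega⟩
  refine ⟨hodd, fun p hp hpd => hp.odd_of_ne_two ?_, ?_⟩
  · rintro rfl
    exact (Nat.not_even_iff_odd.mpr hodd) ((even_iff_two_dvd).mpr hpd)
  · by_contra h
    have hc2 : n.primeFactors.card = 2 := by omega
    obtain ⟨p, q, hpq, hset⟩ := Finset.card_eq_two.mp hc2
    have hpP := (hmem p).mp (hset ▸ by simp)
    have hqP := (hmem q).mp (hset ▸ by simp)
    rw [hset, Finset.prod_pair hpq] at hprod
    -- WLOG handle both orders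
    have key : ∀ a b : ℕ, a.Prime → b.Prime → a < b → a * b = n → False := by
      intro a b hap hbp hab habn
      have hd : (b + 1) ∣ (n - 1) := hdvd b hbp ⟨a, by rw [← habn]; ring⟩
      have hd2 : (b + 1) ∣ a * (b + 1) := Dvd.intro_left a rfl
      have hn1 : n - 1 + (a + 1) = a * (b + 1) := by
        have he : a * (b + 1) = a * b + a := by ring
        rw [he, habn]; omega
      have : (b + 1) ∣ (a + 1) := (Nat.dvd_add_right hd).mp (hn1 ▸ hd2)
      have := Nat.le_of_dvd (by omega) this
      omega
    rcases Nat.lt_or_ge p q with h' | h'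
    · exact key p q hpP.1 hqP.1 h' hprod
    · have : q < p := by omega
      exact key q p hqP.1 hpP.1 this (by rw [← hprod]; ring)
end
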